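/- arXiv:2002.02188 — 2 statements merged into one kernel-verified Lean document; each statement's English description precedes it below -/
import Mathlib

section
/- Let N be a positive integer and t > -log N. The sequence δ_n(t,N) = ∫_N^{n+1} dx/(t+log x) - Σ_{k=N}^n 1/(t+log(k+1/2)) for n ≥ N is positive, strictly increasing, and bounded above; consequently the limit δ(t,N) = lim_{n→∞} δ_n(t,N) exists and is positive. -/
open Real Filter MeasureTheory Finset Topology

/-- The sequence `δ_n(t,N) = ∫_N^{n+1} dx/(t+log x) - Σ_{k=N}^n 1/(t+log(k+1/2))`. -/
noncomputable def deltaSeq (N : ℕ) (t : ℝ) (n : ℕ) : ℝ :=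
  (∫ x in (N : ℝ)..((n : ℝ) + 1), 1 / (t + Real.log x)) -
    ∑ k ∈ Finset.Icc N n, 1 / (t + Real.log ((k : ℝ) + 1/2))

/-! On each unit interval the midpoint rule underestimates the integral of a strictly convex
function (Hermite–Hadamard), so `δ_n` is a sum of positive terms. For a decreasing function the
term on `[k, k+1]` is at most `f k - f (k+1)`, so these sums telescope to at most `f N`. -/

theorem StrictConvexOn.mul_midpoint_lt_intervalIntegral {f : ℝ → ℝ} {a b : ℝ} (hab : a < b)
    (hf : StrictConvexOn ℝ (Set.Icc a b) f) (hfc : ContinuousOn f (Set.Icc a b)) :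
    (b - a) * f ((a + b) / 2) < ∫ x in a..b, f x := by
  -- Pair `x` with its mirror image `a + b - x`: their mean value dominates the midpoint value.
  have hreflect : (∫ x in a..b, f (a + b - x)) = ∫ x in a..b, f x := by
    rw [intervalIntegral.integral_comp_sub_left]
    simp
  have hmirror : ∀ x ∈ Set.Icc a b, a + b - x ∈ Set.Icc a b :=
    fun x hx => ⟨by linarith [hx.2], by linarith [hx.1]⟩
  have hhalf : ∀ x, (1 / 2 : ℝ) • x + (1 / 2 : ℝ) • (a + b - x) = (a + b) / 2 :=
    fun x => by simp only [smul_eq_mul]; ring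
  have hmid_le : ∀ x ∈ Set.Icc a b, 2 * f ((a + b) / 2) ≤ f x + f (a + b - x) := by
    intro x hx
    have h := hf.convexOn.2 hx (hmirror x hx) (by norm_num : (0 : ℝ) ≤ 1 / 2)
      (by norm_num : (0 : ℝ) ≤ 1 / 2) (by norm_num)
    rw [hhalf, smul_eq_mul, smul_eq_mul] at h
    linarith
  have ha : a ∈ Set.Icc a b := Set.left_mem_Icc.2 hab.le
  have hmid_lt : 2 * f ((a + b) / 2) < f a + f (a + b - a) := by
    have h := hf.2 ha (hmirror a ha) (by linarith) (by norm_num : (0 : ℝ) < 1 / 2)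
      (by norm_num : (0 : ℝ) < 1 / 2) (by norm_num)
    rw [hhalf, smul_eq_mul, smul_eq_mul] at h
    linarith
  have hreflc : ContinuousOn (fun x => f (a + b - x)) (Set.Icc a b) :=
    hfc.comp (continuous_const.sub continuous_id).continuousOn
      fun x hx => ⟨by linarith [hx.2], by linarith [hx.1]⟩
  have hlt : (∫ _ in a..b, 2 * f ((a + b) / 2)) < ∫ x in a..b, (f x + f (a + b - x)) :=
    intervalIntegral.integral_lt_integral_of_continuousOn_of_le_of_exists_lt hab
      continuousOn_const (hfc.add hreflc) (fun x hx => hmid_le x (Set.Ioc_subset_Icc_self hx))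
      ⟨a, ha, hmid_lt⟩
  rw [intervalIntegral.integral_add (hfc.intervalIntegrable_of_Icc hab.le)
    (hreflc.intervalIntegrable_of_Icc hab.le), hreflect, intervalIntegral.integral_const,
    smul_eq_mul] at hlt
  linarith

theorem StrictConcaveOn.strictConvexOn_inv {E : Type*} [AddCommGroup E] [Module ℝ E] {s : Set E}
    {g : E → ℝ} (hg : StrictConcaveOn ℝ s g) (hpos : ∀ x ∈ s, 0 < g x) :
    StrictConvexOn ℝ s fun x => (g x)⁻¹ := by
  refine ⟨hg.1, fun x hx y hy hxy a b ha hb hab => ?_⟩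
  have hconc := hg.2 hx hy hxy ha hb hab
  have hmean_pos : 0 < a • g x + b • g y := by
    have := hpos x hx; have := hpos y hy; simp only [smul_eq_mul]; positivity
  have hharm := (convexOn_zpow (𝕜 := ℝ) (-1)).2 (hpos x hx) (hpos y hy) ha.le hb.le hab
  simp only [zpow_neg_one] at hharm
  exact (inv_strictAnti₀ hmean_pos hconc).trans_le hharm

theorem exists_ge_tendsto_of_le_succ_of_le {α : Type*} [ConditionallyCompleteLattice α]
    [TopologicalSpace α] [SupConvergenceClass α] {u : ℕ → α} {N : ℕ} {B : α}
    (hmono : ∀ n ≥ N, u n ≤ u (n + 1)) (hbdd : ∀ n ≥ N, u n ≤ B) :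
    ∃ L, u N ≤ L ∧ Tendsto u atTop (𝓝 L) := by
  have hbdd' : BddAbove (Set.range fun k => u (k + N)) :=
    ⟨B, by rintro _ ⟨k, rfl⟩; exact hbdd _ (Nat.le_add_left N k)⟩
  refine ⟨⨆ k, u (k + N), ?_, (tendsto_add_atTop_iff_nat N).mp
    (tendsto_atTop_ciSup (monotone_add_nat_of_le_succ hmono) hbdd')⟩
  simpa using le_ciSup hbdd' 0

section UnitInterval

variable {f : ℝ → ℝ} {a c : ℝ}

theorem StrictConvexOn.lt_intervalIntegral_add_one (hf : StrictConvexOn ℝ (Set.Ici a) f)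
    (hfc : ContinuousOn f (Set.Ici a)) (hc : a ≤ c) : f (c + 1 / 2) < ∫ x in c..c + 1, f x := by
  have hsub : Set.Icc c (c + 1) ⊆ Set.Ici a := fun x hx => hc.trans hx.1
  have h := (hf.subset hsub (convex_Icc _ _)).mul_midpoint_lt_intervalIntegral (by linarith)
    (hfc.mono hsub)
  rwa [add_sub_cancel_left, one_mul, show (c + (c + 1)) / 2 = c + 1 / 2 by ring] at h

theorem AntitoneOn.intervalIntegral_add_one_le (hf : AntitoneOn f (Set.Ici a))
    (hfc : ContinuousOn f (Set.Ici a)) (hc : a ≤ c) : ∫ x in c..c + 1, f x ≤ f c := by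
  have hsub : Set.Icc c (c + 1) ⊆ Set.Ici a := fun x hx => hc.trans hx.1
  have h := intervalIntegral.integral_mono_on (by linarith : c ≤ c + 1)
    ((hfc.mono hsub).intervalIntegrable_of_Icc (by linarith))
    (intervalIntegrable_const (μ := volume))
    fun x hx => hf hc (hc.trans hx.1) hx.1
  simpa using h

end UnitInterval

noncomputable def midpointDefect (f : ℝ → ℝ) (N n : ℕ) : ℝ :=
  (∫ x in (N : ℝ)..((n : ℝ) + 1), f x) - ∑ k ∈ Icc N n, f ((k : ℝ) + 1 / 2)

section MidpointDefect

variable {f : ℝ → ℝ} {N n : ℕ}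

theorem midpointDefect_eq_sum (hfc : ContinuousOn f (Set.Ici (N : ℝ))) (hn : N ≤ n) :
    midpointDefect f N n =
      ∑ k ∈ Icc N n, ((∫ x in (k : ℝ)..k + 1, f x) - f (k + 1 / 2)) := by
  have hint :
      ∀ k ∈ Set.Ico N (n + 1), IntervalIntegrable f volume (k : ℝ) ((k + 1 : ℕ) : ℝ) := by
    intro k hk
    refine (hfc.mono fun x hx => ?_).intervalIntegrable
    have : (N : ℝ) ≤ k := by exact_mod_cast (Set.mem_Ico.1 hk).1
    rw [Set.uIcc_of_le (by simp)] at hx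
    exact this.trans hx.1
  have h := intervalIntegral.sum_integral_adjacent_intervals_Ico (a := fun k : ℕ => (k : ℝ))
    (by omega) hint
  rw [Finset.Ico_add_one_right_eq_Icc] at h
  push_cast at h
  rw [midpointDefect, sum_sub_distrib, h]

variable (hfc : ContinuousOn f (Set.Ici (N : ℝ)))
include hfc

theorem midpointDefect_pos (hf : StrictConvexOn ℝ (Set.Ici (N : ℝ)) f) (hn : N ≤ n) :
    0 < midpointDefect f N n := by
  rw [midpointDefect_eq_sum hfc hn]
  refine sum_pos (fun k hk => ?_) (nonempty_Icc.2 hn)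
  have : (N : ℝ) ≤ k := by exact_mod_cast (mem_Icc.1 hk).1
  linarith [hf.lt_intervalIntegral_add_one hfc this]

theorem midpointDefect_lt_succ (hf : StrictConvexOn ℝ (Set.Ici (N : ℝ)) f) (hn : N ≤ n) :
    midpointDefect f N n < midpointDefect f N (n + 1) := by
  rw [midpointDefect_eq_sum hfc hn, midpointDefect_eq_sum hfc (by omega),
    sum_Icc_succ_top (by omega)]
  have : (N : ℝ) ≤ (n + 1 : ℕ) := by exact_mod_cast (by omega : N ≤ n + 1)
  linarith [hf.lt_intervalIntegral_add_one hfc this]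

theorem midpointDefect_le (hf : AntitoneOn f (Set.Ici (N : ℝ))) (hn : N ≤ n) :
    midpointDefect f N n ≤ f N - f (n + 1) := by
  have hterm : ∀ k ∈ Icc N n,
      (∫ x in (k : ℝ)..k + 1, f x) - f (k + 1 / 2) ≤ -(f ((k + 1 : ℕ) : ℝ) - f k) := by
    intro k hk
    have hk : (N : ℝ) ≤ k := by exact_mod_cast (mem_Icc.1 hk).1
    have h := hf (by simp only [Set.mem_Ici]; linarith) (by simp only [Set.mem_Ici]; linarith)
      (by linarith : (k : ℝ) + 1 / 2 ≤ k + 1)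
    push_cast
    linarith [hf.intervalIntegral_add_one_le hfc hk]
  rw [midpointDefect_eq_sum hfc hn]
  refine (sum_le_sum hterm).trans_eq ?_
  rw [sum_neg_distrib, sum_Icc_sub hn (fun k : ℕ => f k)]
  push_cast
  ring

end MidpointDefect

section OneDivAddLog

variable {t a : ℝ}

theorem add_log_pos_of_le (ha : 0 < a) (ht : 0 < t + log a) {x : ℝ} (hx : a ≤ x) :
    0 < t + log x := by
  linarith [log_le_log ha hx]

theorem continuousOn_one_div_add_log (ha : 0 < a) (ht : 0 < t + log a) :
    ContinuousOn (fun x => 1 / (t + log x)) (Set.Ici a) :=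
  continuousOn_const.div (continuousOn_const.add
    (continuousOn_log.mono fun _ hx => (ha.trans_le hx).ne'))
    fun _ hx => (add_log_pos_of_le ha ht hx).ne'

theorem antitoneOn_one_div_add_log (ha : 0 < a) (ht : 0 < t + log a) :
    AntitoneOn (fun x => 1 / (t + log x)) (Set.Ici a) := fun x hx _ _ hxy =>
  one_div_le_one_div_of_le (add_log_pos_of_le ha ht hx)
    (by linarith [log_le_log (ha.trans_le hx) hxy])

theorem strictConvexOn_one_div_add_log (ha : 0 < a) (ht : 0 < t + log a) :
    StrictConvexOn ℝ (Set.Ici a) fun x => 1 / (t + log x) := by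
  have hconc : StrictConcaveOn ℝ (Set.Ici a) fun x => t + log x := by
    have h := (strictConcaveOn_log_Ioi.subset (Set.Ici_subset_Ioi.2 ha) (convex_Ici a)).add_const t
    rwa [show (log + fun _ => t) = fun x => t + log x from funext fun x => add_comm (log x) t] at h
  simpa only [one_div] using hconc.strictConvexOn_inv fun x hx => add_log_pos_of_le ha ht hx

end OneDivAddLog

theorem stmt_11 (N : ℕ) (hN : 0 < N) (t : ℝ) (ht : -Real.log N < t) :
    (∀ n : ℕ, N ≤ n → 0 < deltaSeq N t n) ∧
    (∀ n : ℕ, N ≤ n → deltaSeq N t n < deltaSeq N t (n + 1)) ∧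
    (∃ B : ℝ, ∀ n : ℕ, N ≤ n → deltaSeq N t n ≤ B) ∧
    ∃ L : ℝ, 0 < L ∧ Filter.Tendsto (deltaSeq N t) Filter.atTop (𝓝 L) := by
  have hN' : (0 : ℝ) < N := by exact_mod_cast hN
  have ht' : 0 < t + log N := by linarith
  have hfc := continuousOn_one_div_add_log hN' ht'
  have hconv := strictConvexOn_one_div_add_log hN' ht'
  have hsucc : ∀ n ≥ N, midpointDefect (fun x => 1 / (t + log x)) N n <
      midpointDefect (fun x => 1 / (t + log x)) N (n + 1) :=
    fun n hn => midpointDefect_lt_succ hfc hconv hn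
  have hbdd : ∀ n ≥ N, midpointDefect (fun x => 1 / (t + log x)) N n ≤ 1 / (t + log N) := by
    intro n hn
    have hn' : (N : ℝ) ≤ n + 1 := by norm_cast; omega
    have := midpointDefect_le hfc (antitoneOn_one_div_add_log hN' ht') hn
    have := one_div_pos.2 (add_log_pos_of_le hN' ht' hn')
    linarith
  obtain ⟨L, hL, hlim⟩ := exists_ge_tendsto_of_le_succ_of_le (fun n hn => (hsucc n hn).le) hbdd
  have hdelta : deltaSeq N t = midpointDefect (fun x => 1 / (t + log x)) N := rfl
  rw [hdelta]
  exact ⟨fun n hn => midpointDefect_pos hfc hconv hn, hsucc, ⟨_, hbdd⟩, L,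
    (midpointDefect_pos hfc hconv le_rfl).trans_le hL, hlim⟩
end

section
/- Let N be a positive integer and t > -log N. For all n ≥ N, one has θ(t,N) - θ_n(t,N) ≤ ∫_n^∞ dx/(24 x^2(t+log x)^2) + 1/(24(n+1/2)(t+log(n+1/2))^2) + 1/(24 n^2(t+log n)^2) + 1/(12 n^2 (t+log n)^3), and θ(t,N) - θ_n(t,N) ≥ ∫_{n+1}^∞ dx/(24 x^2(t+log x)^2) + 1/(24(n+1)(t+log(n+1))^2), where θ_n(t,N) = ∫_N^n dx/(t+log x) - Σ_{k=N}^{n-1} 1/(H_k - γ + t) and θ(t,N) is its limit as n → ∞. -/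
/-!
Write `f x = 1 / (t + log x)`. Then `θ(t,N) - θ_n(t,N) = ∑_{k ≥ n} (η_k + δ_k)` with
`η_k = ∫_k^{k+1} f - f (k + 1/2)` and `δ_k = f (k + 1/2) - 1 / (H_k - γ + t)`.
Since `f''` is positive and decreasing, the midpoint rule puts `η_k` between `f'' (k + 1) / 24` and
`f'' k / 24`. Writing `H_k - γ = log (k + 1/2) + d_k`, the series of `log ((1 + y) / (1 - y))`
bounds the increments of `d_k`, and telescoping gives
`1 / (24 (k+1)^2) ≤ d_k ≤ 1 / (24 (k+1/2)^2)`;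
together with `H_k - γ < log (k + 1)` this puts `δ_k` between `g (k + 1) / 24` and
`g (k + 1/2) / 24`, where `g x = 1 / (x^2 (t + log x)^2)`. Finally the sums of `f''` and `g` are
compared with integrals: from below by monotonicity, from above by convexity (the midpoint rule
once more), and `∫ f'' = -f'` is explicit.
-/

open Real Filter MeasureTheory Finset Topology

/-- The sequence `θ_n(t,N) = ∫_N^n dx/(t+log x) - Σ_{k=N}^{n-1} 1/(H_k - γ + t)`. -/
noncomputable def thetaSeq (N : ℕ) (t : ℝ) (n : ℕ) : ℝ :=
  (∫ x in (N : ℝ)..(n : ℝ), 1 / (t + Real.log x)) -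
    ∑ k ∈ Finset.Ico N n, 1 / ((harmonic k : ℝ) - Real.eulerMascheroniConstant + t)

open Set

theorem quadratic_le_of_le_deriv2 {h h' h'' : ℝ → ℝ} {a b m C x : ℝ} (hm : m ∈ Icc a b)
    (hx : x ∈ Icc a b) (hh : ∀ y ∈ Icc a b, HasDerivAt h (h' y) y)
    (hh' : ∀ y ∈ Icc a b, HasDerivAt h' (h'' y) y) (hC : ∀ y ∈ Icc a b, C ≤ h'' y) :
    h m + h' m * (x - m) + C * (x - m) ^ 2 / 2 ≤ h x := by
  set g : ℝ → ℝ := fun y => h y - C * (y - m) ^ 2 / 2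
  have hg : ∀ y ∈ Icc a b, HasDerivAt g (h' y - C * (y - m)) y := fun y hy =>
    ((hh y hy).sub ((((hasDerivAt_id' y).sub_const m).pow 2).const_mul C |>.div_const 2))
      |>.congr_deriv (by push_cast; ring)
  have hg' : ∀ y ∈ Icc a b, HasDerivAt (fun y => h' y - C * (y - m)) (h'' y - C) y :=
    fun y hy => ((hh' y hy).sub (((hasDerivAt_id' y).sub_const m).const_mul C)).congr_deriv
      (by ring)
  have hconv : ConvexOn ℝ (Icc a b) g :=
    convexOn_of_hasDerivWithinAt2_nonneg (convex_Icc a b)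
      (fun y hy => (hg y hy).continuousAt.continuousWithinAt)
      (fun y hy => (hg y (interior_subset hy)).hasDerivWithinAt)
      (fun y hy => (hg' y (interior_subset hy)).hasDerivWithinAt)
      (fun y hy => sub_nonneg.2 (hC y (interior_subset hy)))
  have htangent : g m + h' m * (x - m) ≤ g x := by
    have hgm : HasDerivAt g (h' m) m := by simpa using hg m hm
    rcases lt_trichotomy m x with hmx | rfl | hxm
    · have := hconv.le_slope_of_hasDerivAt hm hx hmx hgm
      rw [slope_def_field, le_div_iff₀ (sub_pos.2 hmx)] at this
      linarith
    · simp
    · have := hconv.slope_le_of_hasDerivAt hx hm hxm hgm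
      rw [slope_def_field, div_le_iff₀ (sub_pos.2 hxm)] at this
      linarith
  simp only [g, sub_self] at htangent
  linarith

theorem integral_quadratic_around_midpoint (a A B C : ℝ) :
    ∫ x in a..a + 1, (A + B * (x - (a + 1 / 2)) + C * (x - (a + 1 / 2)) ^ 2 / 2) =
      A + C / 24 := by
  rw [intervalIntegral.integral_comp_sub_right (fun x => A + B * x + C * x ^ 2 / 2),
    intervalIntegral.integral_add, intervalIntegral.integral_add,
    intervalIntegral.integral_const_mul, intervalIntegral.integral_div,
    intervalIntegral.integral_const_mul]
  · norm_num
    ring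
  all_goals exact Continuous.intervalIntegrable (by fun_prop) _ _

theorem le_integral_sub_midpoint {h h' h'' : ℝ → ℝ} {a C : ℝ}
    (hh : ∀ y ∈ Icc a (a + 1), HasDerivAt h (h' y) y)
    (hh' : ∀ y ∈ Icc a (a + 1), HasDerivAt h' (h'' y) y)
    (hC : ∀ y ∈ Icc a (a + 1), C ≤ h'' y) :
    C / 24 ≤ (∫ x in a..a + 1, h x) - h (a + 1 / 2) := by
  have hint : IntervalIntegrable h volume a (a + 1) := by
    refine ContinuousOn.intervalIntegrable fun y hy => (hh y ?_).continuousAt.continuousWithinAt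
    rwa [Set.uIcc_of_le (by linarith)] at hy
  have := intervalIntegral.integral_mono_on (by linarith)
    (Continuous.intervalIntegrable (by fun_prop) _ _) hint
    fun x hx =>
      quadratic_le_of_le_deriv2 (m := a + 1 / 2) ⟨by linarith, by linarith⟩ hx hh hh' hC
  rw [integral_quadratic_around_midpoint] at this
  linarith

theorem integral_sub_midpoint_le {h h' h'' : ℝ → ℝ} {a C : ℝ}
    (hh : ∀ y ∈ Icc a (a + 1), HasDerivAt h (h' y) y)
    (hh' : ∀ y ∈ Icc a (a + 1), HasDerivAt h' (h'' y) y)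
    (hC : ∀ y ∈ Icc a (a + 1), h'' y ≤ C) :
    (∫ x in a..a + 1, h x) - h (a + 1 / 2) ≤ C / 24 := by
  have := le_integral_sub_midpoint (h := fun y => -h y) (h' := fun y => -h' y)
    (h'' := fun y => -h'' y) (C := -C) (fun y hy => (hh y hy).neg) (fun y hy => (hh' y hy).neg)
    (fun y hy => neg_le_neg (hC y hy))
  rw [intervalIntegral.integral_neg] at this
  linarith

theorem intervalIntegrable_of_continuousOn_Ioi {g : ℝ → ℝ} {b x₀ x₁ : ℝ}
    (hg : ContinuousOn g (Ioi b)) (hb : b < x₀) (h : x₀ ≤ x₁) :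
    IntervalIntegrable g volume x₀ x₁ :=
  (hg.mono fun _ hy => hb.trans_le hy.1).intervalIntegrable_of_Icc h

theorem sum_range_le_integral {g : ℝ → ℝ} {b : ℕ → ℝ} {x₀ : ℝ} {n : ℕ}
    (hg : ContinuousOn g (Ici x₀))
    (hb : ∀ i < n, b i ≤ ∫ x in x₀ + i..x₀ + i + 1, g x) :
    ∑ i ∈ range n, b i ≤ ∫ x in x₀..x₀ + n, g x := by
  have hpieces := intervalIntegral.sum_integral_adjacent_intervals (μ := volume)
    (a := fun i => x₀ + i) (n := n) (f := g) fun i _ =>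
      (hg.mono fun y hy => (le_add_of_nonneg_right (Nat.cast_nonneg i)).trans hy.1
        ).intervalIntegrable_of_Icc (by push_cast; linarith)
  push_cast at hpieces
  simp only [add_zero, ← add_assoc] at hpieces
  rw [← hpieces]
  exact Finset.sum_le_sum fun i hi => hb i (Finset.mem_range.1 hi)

theorem intervalIntegral_le_integral_Ioi_of_nonneg {g : ℝ → ℝ} {x₀ x₁ : ℝ}
    (h : x₀ ≤ x₁) (hg : IntegrableOn g (Ioi x₀)) (hg₀ : ∀ x ∈ Ioi x₀, 0 ≤ g x) :
    ∫ x in x₀..x₁, g x ≤ ∫ x in Ioi x₀, g x := by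
  rw [intervalIntegral.integral_of_le h]
  exact setIntegral_mono_set hg ((ae_restrict_iff' measurableSet_Ioi).2 (.of_forall hg₀))
    Ioc_subset_Ioi_self.eventuallyLE

theorem log_one_add_sub_log_one_sub_bounds {y : ℝ} (hy0 : 0 ≤ y) (hy1 : y < 1) :
    2 * y ^ 3 / 3 ≤ log (1 + y) - log (1 - y) - 2 * y ∧
      log (1 + y) - log (1 - y) - 2 * y ≤ 2 * y ^ 3 / (3 * (1 - y ^ 2)) := by
  have hsum := (hasSum_nat_add_iff' 1).mpr
    (hasSum_log_sub_log_of_abs_lt_one (abs_lt.2 ⟨by linarith, hy1⟩))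
  norm_num at hsum
  have hy2 : y ^ 2 < 1 := by nlinarith
  constructor
  · have := le_hasSum hsum 0 (fun k _ => by positivity)
    norm_num at this
    linarith
  · have hgeom := (hasSum_geometric_of_lt_one (sq_nonneg y) hy2).mul_left (2 * y ^ 3 / 3)
    refine (hasSum_le (fun k => ?_) hsum hgeom).trans_eq ?_
    · rw [show y ^ (2 * (k + 1) + 1) = y ^ 3 * (y ^ 2) ^ k by ring,
        show 2 * y ^ 3 / 3 * (y ^ 2) ^ k = 2 * 3⁻¹ * (y ^ 3 * (y ^ 2) ^ k) by ring]
      gcongr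
      linarith [k.cast_nonneg (α := ℝ)]
    · field_simp

theorem log_add_half_sub_log_sub_half_bounds {m : ℝ} (hm : 1 / 2 < m) :
    1 / (24 * m ^ 2) - 1 / (24 * (m + 1) ^ 2) ≤ log (m + 1 / 2) - log (m - 1 / 2) - 1 / m ∧
      log (m + 1 / 2) - log (m - 1 / 2) - 1 / m ≤
        1 / (24 * (m - 1 / 2) ^ 2) - 1 / (24 * (m + 1 / 2) ^ 2) := by
  have hm0 : 0 < m := by linarith
  have hm1 : 0 < m - 1 / 2 := by linarith
  have hy : 1 / (2 * m) < 1 := by rw [div_lt_one (by positivity)]; linarith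
  obtain ⟨hlow, hupp⟩ := log_one_add_sub_log_one_sub_bounds (by positivity) hy
  have hlog : log (m + 1 / 2) - log (m - 1 / 2) - 1 / m =
      log (1 + 1 / (2 * m)) - log (1 - 1 / (2 * m)) - 2 * (1 / (2 * m)) := by
    rw [show m + 1 / 2 = m * (1 + 1 / (2 * m)) by field_simp,
      show m - 1 / 2 = m * (1 - 1 / (2 * m)) by field_simp,
      log_mul hm0.ne' (by positivity), log_mul hm0.ne' (by linarith)]
    ring
  rw [hlog]
  constructor
  · refine le_trans ?_ hlow
    rw [show 2 * (1 / (2 * m)) ^ 3 / 3 = 1 / (12 * m ^ 3) by field_simp; ring,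
      div_sub_div _ _ (by positivity) (by positivity),
      div_le_div_iff₀ (by positivity) (by positivity)]
    nlinarith [pow_pos hm0 3, pow_pos hm0 4, pow_pos hm0 5, pow_pos hm0 6]
  · refine hupp.trans ?_
    have hsq : 1 - (1 / (2 * m)) ^ 2 = (m - 1 / 2) * (m + 1 / 2) / m ^ 2 := by field_simp; ring
    have e1 : 2 * (1 / (2 * m)) ^ 3 / (3 * (1 - (1 / (2 * m)) ^ 2)) =
        1 / (12 * m * ((m - 1 / 2) * (m + 1 / 2))) := by
      rw [hsq, div_eq_div_iff (by positivity) (by positivity)]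
      field_simp
      ring
    have e2 : 1 / (24 * (m - 1 / 2) ^ 2) - 1 / (24 * (m + 1 / 2) ^ 2) =
        m / (12 * ((m - 1 / 2) * (m + 1 / 2)) ^ 2) := by
      rw [div_sub_div _ _ (by positivity) (by positivity),
        div_eq_div_iff (by positivity) (by positivity)]
      ring
    rw [e1, e2, div_le_div_iff₀ (by positivity) (by positivity)]
    nlinarith [mul_pos hm1 hm0]

theorem le_of_sub_succ_le_of_tendsto {u v : ℕ → ℝ} {l : ℝ}
    (h : ∀ j, u j - u (j + 1) ≤ v j - v (j + 1)) (hu : Tendsto u atTop (𝓝 l))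
    (hv : Tendsto v atTop (𝓝 l)) (k : ℕ) : u k ≤ v k := by
  have hanti : Antitone fun j => v j - u j := antitone_nat_of_succ_le fun j => by linarith [h j]
  linarith [hanti.le_of_tendsto (by simpa using hv.sub hu) k]

theorem tendsto_one_div_mul_add_sq (a c : ℝ) (ha : 0 < a) :
    Tendsto (fun k : ℕ => 1 / (a * ((k : ℝ) + c) ^ 2)) atTop (𝓝 0) := by
  simp_rw [one_div]
  exact (((tendsto_pow_atTop two_ne_zero).comp (tendsto_atTop_add_const_right _ c
    tendsto_natCast_atTop_atTop)).const_mul_atTop ha).inv_tendsto_atTop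

theorem tendsto_harmonic_sub_log_add_half :
    Tendsto (fun k : ℕ => (harmonic k : ℝ) - eulerMascheroniConstant - log (k + 1 / 2))
      atTop (𝓝 0) := by
  have := (tendsto_harmonic_sub_log.sub_const eulerMascheroniConstant).sub
    ((tendsto_log_comp_add_sub_log (1 / 2)).comp tendsto_natCast_atTop_atTop)
  simp only [sub_self] at this
  exact this.congr fun k => by simp only [Function.comp]; ring

theorem harmonic_sub_log_add_half_bounds (k : ℕ) :
    1 / (24 * ((k : ℝ) + 1) ^ 2) ≤ harmonic k - eulerMascheroniConstant - log (k + 1 / 2) ∧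
      (harmonic k : ℝ) - eulerMascheroniConstant - log (k + 1 / 2) ≤
        1 / (24 * ((k : ℝ) + 1 / 2) ^ 2) := by
  have hstep (j : ℕ) := log_add_half_sub_log_sub_half_bounds (m := (j : ℝ) + 1)
    (by linarith [j.cast_nonneg (α := ℝ)])
  have hdiff (j : ℕ) : ((harmonic j : ℝ) - eulerMascheroniConstant - log (j + 1 / 2)) -
      ((harmonic (j + 1) : ℝ) - eulerMascheroniConstant - log ((j + 1 : ℕ) + 1 / 2)) =
      log ((j + 1 : ℝ) + 1 / 2) - log ((j + 1 : ℝ) - 1 / 2) - 1 / ((j : ℝ) + 1) := by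
    rw [harmonic_succ]
    push_cast
    ring_nf
  constructor
  · refine le_of_sub_succ_le_of_tendsto (fun j => ?_)
      (tendsto_one_div_mul_add_sq 24 1 (by norm_num)) tendsto_harmonic_sub_log_add_half k
    rw [hdiff]
    exact_mod_cast (hstep j).1
  · refine le_of_sub_succ_le_of_tendsto (fun j => ?_) tendsto_harmonic_sub_log_add_half
      (tendsto_one_div_mul_add_sq 24 (1 / 2) (by norm_num)) k
    rw [hdiff]
    convert (hstep j).2 using 4 <;> push_cast <;> ring

noncomputable def powLogInv (t : ℝ) (a j : ℕ) (x : ℝ) : ℝ := (x ^ a * (t + log x) ^ j)⁻¹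

/-- The second derivative of `x ↦ 1 / (t + log x)`. -/
noncomputable def invLogDeriv2 (t x : ℝ) : ℝ := powLogInv t 2 2 x + 2 * powLogInv t 2 3 x

section PowLogInv

variable {t : ℝ}

theorem exp_neg_lt_iff {x : ℝ} : exp (-t) < x ↔ 0 < x ∧ 0 < t + log x := by
  refine ⟨fun h => ?_, fun ⟨hx, hu⟩ => (lt_log_iff_exp_lt hx).1 (by linarith)⟩
  have hx := (exp_pos _).trans h
  exact ⟨hx, by linarith [(lt_log_iff_exp_lt hx).2 h]⟩

theorem powLogInv_pos (a j : ℕ) {x : ℝ} (hx : exp (-t) < x) : 0 < powLogInv t a j x := by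
  obtain ⟨hx, hu⟩ := exp_neg_lt_iff.1 hx
  unfold powLogInv
  positivity

theorem hasDerivAt_powLogInv (a j : ℕ) {x : ℝ} (hx : exp (-t) < x) :
    HasDerivAt (powLogInv t a j)
      (-(a * powLogInv t (a + 1) j x + j * powLogInv t (a + 1) (j + 1) x)) x := by
  obtain ⟨hx, hu⟩ := exp_neg_lt_iff.1 hx
  have hprod : HasDerivAt (fun y => y ^ a * (t + log y) ^ j)
      (a * x ^ (a - 1) * (t + log x) ^ j + x ^ a * (j * (t + log x) ^ (j - 1) * x⁻¹)) x :=
    (hasDerivAt_pow a x).mul (((hasDerivAt_log hx.ne').const_add t).pow j)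
  refine (hprod.inv (by positivity)).congr_deriv ?_
  unfold powLogInv
  rcases a with _ | a <;> rcases j with _ | j <;> simp only [Nat.add_sub_cancel, pow_zero] <;>
    field_simp <;> ring

theorem continuousOn_powLogInv (a j : ℕ) : ContinuousOn (powLogInv t a j) (Ioi (exp (-t))) :=
  fun _ hx => (hasDerivAt_powLogInv a j hx).continuousAt.continuousWithinAt

theorem antitoneOn_powLogInv (a j : ℕ) : AntitoneOn (powLogInv t a j) (Ioi (exp (-t))) := by
  refine antitoneOn_of_hasDerivWithinAt_nonpos (convex_Ioi _) (continuousOn_powLogInv a j)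
    (fun x hx => (hasDerivAt_powLogInv a j (interior_subset hx)).hasDerivWithinAt) fun x hx => ?_
  have := powLogInv_pos (a + 1) j (interior_subset hx)
  have := powLogInv_pos (a + 1) (j + 1) (interior_subset hx)
  exact neg_nonpos.2 (by positivity)

theorem powLogInv_midpoint_le_integral (a j : ℕ) {x₀ : ℝ} (hx₀ : exp (-t) < x₀) :
    powLogInv t a j (x₀ + 1 / 2) ≤ ∫ x in x₀..x₀ + 1, powLogInv t a j x := by
  have hdom : ∀ y ∈ Icc x₀ (x₀ + 1), exp (-t) < y := fun y hy => hx₀.trans_le hy.1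
  have := le_integral_sub_midpoint (C := 0) (fun y hy => hasDerivAt_powLogInv a j (hdom y hy))
    (fun y hy => (((hasDerivAt_powLogInv (a + 1) j (hdom y hy)).const_mul (a : ℝ)).add
      ((hasDerivAt_powLogInv (a + 1) (j + 1) (hdom y hy)).const_mul (j : ℝ))).neg)
    (fun y hy => ?_)
  · linarith
  · have := powLogInv_pos (a + 2) j (hdom y hy)
    have := powLogInv_pos (a + 2) (j + 1) (hdom y hy)
    have := powLogInv_pos (a + 2) (j + 2) (hdom y hy)
    simp only [mul_neg, ← neg_add, neg_neg]
    positivity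

theorem hasDerivAt_one_div_add_log {x : ℝ} (hx : exp (-t) < x) :
    HasDerivAt (fun y => 1 / (t + log y)) (-powLogInv t 1 2 x) x := by
  convert hasDerivAt_powLogInv 0 1 hx using 1
  · funext y
    simp [powLogInv]
  · simp

theorem hasDerivAt_neg_powLogInv_one_two {x : ℝ} (hx : exp (-t) < x) :
    HasDerivAt (fun y => -powLogInv t 1 2 y) (invLogDeriv2 t x) x :=
  (hasDerivAt_powLogInv 1 2 hx).neg.congr_deriv (by simp [invLogDeriv2])

theorem invLogDeriv2_pos {x : ℝ} (hx : exp (-t) < x) : 0 < invLogDeriv2 t x :=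
  add_pos (powLogInv_pos 2 2 hx) (mul_pos two_pos (powLogInv_pos 2 3 hx))

theorem continuousOn_invLogDeriv2 : ContinuousOn (invLogDeriv2 t) (Ioi (exp (-t))) :=
  (continuousOn_powLogInv 2 2).add ((continuousOn_powLogInv 2 3).const_smul (2 : ℝ))

theorem antitoneOn_invLogDeriv2 : AntitoneOn (invLogDeriv2 t) (Ioi (exp (-t))) :=
  fun _ hx _ hy hxy => add_le_add (antitoneOn_powLogInv 2 2 hx hy hxy)
    (mul_le_mul_of_nonneg_left (antitoneOn_powLogInv 2 3 hx hy hxy) zero_le_two)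

theorem invLogDeriv2_midpoint_le_integral {x₀ : ℝ} (hx₀ : exp (-t) < x₀) :
    invLogDeriv2 t (x₀ + 1 / 2) ≤ ∫ x in x₀..x₀ + 1, invLogDeriv2 t x := by
  have hi (a j : ℕ) : IntervalIntegrable (powLogInv t a j) volume x₀ (x₀ + 1) :=
    intervalIntegrable_of_continuousOn_Ioi (continuousOn_powLogInv a j) hx₀ (by linarith)
  simp only [invLogDeriv2]
  rw [intervalIntegral.integral_add (hi 2 2) ((hi 2 3).const_mul 2),
    intervalIntegral.integral_const_mul]
  linarith [powLogInv_midpoint_le_integral 2 2 hx₀, powLogInv_midpoint_le_integral 2 3 hx₀]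

theorem integral_one_div_add_log_sub_midpoint_bounds {a : ℝ} (ha : exp (-t) < a) :
    invLogDeriv2 t (a + 1) / 24 ≤
        (∫ x in a..a + 1, 1 / (t + log x)) - 1 / (t + log (a + 1 / 2)) ∧
      (∫ x in a..a + 1, 1 / (t + log x)) - 1 / (t + log (a + 1 / 2)) ≤
        invLogDeriv2 t a / 24 := by
  have hdom : ∀ y ∈ Icc a (a + 1), exp (-t) < y := fun y hy => ha.trans_le hy.1
  have hf := fun y hy => hasDerivAt_one_div_add_log (hdom y hy)
  have hf' := fun y hy => hasDerivAt_neg_powLogInv_one_two (hdom y hy)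
  have hbound : ∀ y ∈ Icc a (a + 1), invLogDeriv2 t (a + 1) ≤ invLogDeriv2 t y ∧
      invLogDeriv2 t y ≤ invLogDeriv2 t a := fun y hy =>
    ⟨antitoneOn_invLogDeriv2 (hdom y hy) (hdom _ ⟨by linarith, le_rfl⟩) hy.2,
      antitoneOn_invLogDeriv2 ha (hdom y hy) hy.1⟩
  exact ⟨le_integral_sub_midpoint hf hf' fun y hy => (hbound y hy).1,
    integral_sub_midpoint_le hf hf' fun y hy => (hbound y hy).2⟩

theorem tendsto_powLogInv_one_two_atTop : Tendsto (powLogInv t 1 2) atTop (𝓝 0) := by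
  have : Tendsto (fun x => x ^ 1 * (t + log x) ^ 2) atTop atTop := by
    simp only [pow_one]
    exact tendsto_id.atTop_mul_atTop₀
      ((tendsto_pow_atTop two_ne_zero).comp (tendsto_atTop_add_const_left _ t tendsto_log_atTop))
  exact this.inv_tendsto_atTop

theorem integrableOn_Ioi_invLogDeriv2 {x₀ : ℝ} (hx₀ : exp (-t) < x₀) :
    IntegrableOn (invLogDeriv2 t) (Ioi x₀) := by
  refine integrableOn_Ioi_deriv_of_nonneg' (g := fun y => -powLogInv t 1 2 y) (l := 0)
    (fun x hx => hasDerivAt_neg_powLogInv_one_two (hx₀.trans_le hx)) (fun x hx => ?_) ?_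
  · exact (invLogDeriv2_pos (hx₀.trans hx)).le
  · simpa using tendsto_powLogInv_one_two_atTop.neg

theorem integrableOn_Ioi_powLogInv_two_two {x₀ : ℝ} (hx₀ : exp (-t) < x₀) :
    IntegrableOn (powLogInv t 2 2) (Ioi x₀) := by
  refine (integrableOn_Ioi_invLogDeriv2 hx₀).mono'
    (((continuousOn_powLogInv 2 2).mono (Ioi_subset_Ioi hx₀.le)).aestronglyMeasurable
      measurableSet_Ioi) ((ae_restrict_iff' measurableSet_Ioi).2 (.of_forall fun x hx => ?_))
  have hx' := hx₀.trans hx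
  rw [Real.norm_of_nonneg (powLogInv_pos 2 2 hx').le]
  exact le_add_of_nonneg_right (mul_pos two_pos (powLogInv_pos 2 3 hx')).le

theorem integral_invLogDeriv2 {x₀ x₁ : ℝ} (hx₀ : exp (-t) < x₀) (h : x₀ ≤ x₁) :
    ∫ x in x₀..x₁, invLogDeriv2 t x = powLogInv t 1 2 x₀ - powLogInv t 1 2 x₁ := by
  rw [intervalIntegral.integral_eq_sub_of_hasDerivAt (f := fun y => -powLogInv t 1 2 y)
    (fun y hy => hasDerivAt_neg_powLogInv_one_two (hx₀.trans_le (by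
      rw [Set.uIcc_of_le h] at hy; exact hy.1)))
    (intervalIntegrable_of_continuousOn_Ioi continuousOn_invLogDeriv2 hx₀ h)]
  ring

theorem sub_powLogInv_one_two_le_sum_range {x₀ : ℝ} (hx₀ : exp (-t) < x₀) (a : ℕ) :
    powLogInv t 1 2 x₀ - powLogInv t 1 2 (x₀ + a) ≤
      ∑ i ∈ range a, invLogDeriv2 t (x₀ + i) := by
  rw [← integral_invLogDeriv2 hx₀ (by linarith [a.cast_nonneg (α := ℝ)])]
  exact (antitoneOn_invLogDeriv2.mono fun y hy => hx₀.trans_le hy.1).integral_le_sum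

theorem sum_range_invLogDeriv2_le {x₀ : ℝ} (hx₀ : exp (-t) < x₀) (a : ℕ) :
    ∑ i ∈ range a, invLogDeriv2 t (x₀ + i) ≤
      invLogDeriv2 t x₀ + powLogInv t 1 2 (x₀ + 1 / 2) := by
  have hx₀' : exp (-t) < x₀ + 1 / 2 := by linarith
  -- after the first one, the terms are midpoint values on `[x₀ + 1/2 + i, x₀ + 3/2 + i]`
  have hmid := sum_range_le_integral (b := fun i => invLogDeriv2 t (x₀ + (i + 1 : ℕ))) (n := a)
    (continuousOn_invLogDeriv2.mono (Ici_subset_Ioi.2 hx₀'))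
    fun i _ => by
      convert invLogDeriv2_midpoint_le_integral (t := t) (x₀ := x₀ + 1 / 2 + i) (by
        linarith [i.cast_nonneg (α := ℝ)]) using 2
      push_cast; ring
  rw [integral_invLogDeriv2 hx₀' (by linarith [a.cast_nonneg (α := ℝ)])] at hmid
  calc ∑ i ∈ range a, invLogDeriv2 t (x₀ + i)
      ≤ ∑ i ∈ range (a + 1), invLogDeriv2 t (x₀ + i) := by
        rw [Finset.sum_range_succ]
        exact le_add_of_nonneg_right (invLogDeriv2_pos (by linarith [a.cast_nonneg (α := ℝ)])).le
    _ = invLogDeriv2 t x₀ + ∑ i ∈ range a, invLogDeriv2 t (x₀ + (i + 1 : ℕ)) := by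
        rw [Finset.sum_range_succ', add_comm]
        simp
    _ ≤ invLogDeriv2 t x₀ + powLogInv t 1 2 (x₀ + 1 / 2) := by
        have : exp (-t) < x₀ + 1 / 2 + a := by linarith [a.cast_nonneg (α := ℝ)]
        linarith [powLogInv_pos 1 2 this]

theorem sum_range_powLogInv_two_two_le {x₀ : ℝ} (hx₀ : exp (-t) < x₀) (a : ℕ) :
    ∑ i ∈ range a, powLogInv t 2 2 (x₀ + i + 1 / 2) ≤
      ∫ x in Ioi x₀, powLogInv t 2 2 x :=
  (sum_range_le_integral ((continuousOn_powLogInv 2 2).mono (Ici_subset_Ioi.2 hx₀))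
    fun i _ => powLogInv_midpoint_le_integral 2 2 (by linarith [i.cast_nonneg (α := ℝ)])).trans
    (intervalIntegral_le_integral_Ioi_of_nonneg (by linarith [a.cast_nonneg (α := ℝ)])
      (integrableOn_Ioi_powLogInv_two_two hx₀)
      fun x hx => (powLogInv_pos 2 2 (hx₀.trans hx)).le)

theorem powLogInv_div (a j : ℕ) (b x : ℝ) :
    powLogInv t a j x / b = 1 / (b * x ^ a * (t + log x) ^ j) := by
  simp only [powLogInv, div_eq_mul_inv, mul_inv]
  ring

end PowLogInv

noncomputable def thetaTerm (t : ℝ) (k : ℕ) : ℝ :=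
  (∫ x in (k : ℝ)..k + 1, 1 / (t + log x)) -
    1 / ((harmonic k : ℝ) - eulerMascheroniConstant + t)

section Theta

variable {t : ℝ}

theorem one_div_add_log_sub_one_div_harmonic_bounds (k : ℕ)
    (hk : exp (-t) < k + 1 / 2) :
    powLogInv t 2 2 (k + 1) / 24 ≤
        1 / (t + log (k + 1 / 2)) - 1 / ((harmonic k : ℝ) - eulerMascheroniConstant + t) ∧
      1 / (t + log (k + 1 / 2)) - 1 / ((harmonic k : ℝ) - eulerMascheroniConstant + t) ≤
        powLogInv t 2 2 (k + 1 / 2) / 24 := by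
  set u := t + log (k + 1 / 2)
  set d := (harmonic k : ℝ) - eulerMascheroniConstant - log (k + 1 / 2)
  set v := t + log (k + 1)
  obtain ⟨hd₁, hd₂⟩ := harmonic_sub_log_add_half_bounds k
  have hu : 0 < u := (exp_neg_lt_iff.1 hk).2
  have hd : 0 < d := lt_of_lt_of_le (by positivity) hd₁
  have hudv : u + d ≤ v := by
    have := (eulerMascheroniSeq_lt_eulerMascheroniConstant k).le
    simp only [eulerMascheroniSeq] at this
    simp only [u, d, v]
    linarith
  have hdiff :
      1 / u - 1 / ((harmonic k : ℝ) - eulerMascheroniConstant + t) = d / (u * (u + d)) := by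
    rw [show (harmonic k : ℝ) - eulerMascheroniConstant + t = u + d by ring]
    field_simp
    ring
  rw [hdiff]
  constructor
  · calc powLogInv t 2 2 (k + 1) / 24 = 1 / (24 * ((k : ℝ) + 1) ^ 2) / (v * v) := by
          simp only [powLogInv, v]; field_simp
      _ ≤ d / (u * (u + d)) := by gcongr <;> linarith
  · calc d / (u * (u + d)) ≤ d / (u * u) := by gcongr; linarith
      _ ≤ 1 / (24 * ((k : ℝ) + 1 / 2) ^ 2) / (u * u) := by gcongr
      _ = powLogInv t 2 2 (k + 1 / 2) / 24 := by simp only [powLogInv, u]; field_simp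

theorem thetaTerm_bounds {k : ℕ} (hk : exp (-t) < k) :
    (invLogDeriv2 t (k + 1) + powLogInv t 2 2 (k + 1)) / 24 ≤ thetaTerm t k ∧
      thetaTerm t k ≤ (invLogDeriv2 t k + powLogInv t 2 2 (k + 1 / 2)) / 24 := by
  obtain ⟨hη₁, hη₂⟩ := integral_one_div_add_log_sub_midpoint_bounds hk
  obtain ⟨hδ₁, hδ₂⟩ :=
    one_div_add_log_sub_one_div_harmonic_bounds (t := t) k (by linarith)
  unfold thetaTerm
  constructor <;> linarith

theorem thetaSeq_add_sub {N : ℕ} (hN : exp (-t) < N) {n : ℕ} (hn : N ≤ n) (a : ℕ) :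
    thetaSeq N t (n + a) - thetaSeq N t n = ∑ i ∈ range a, thetaTerm t (n + i) := by
  have hf : ContinuousOn (fun x => 1 / (t + log x)) (Ioi (exp (-t))) :=
    fun x hx => (hasDerivAt_one_div_add_log hx).continuousAt.continuousWithinAt
  have hnN : (N : ℝ) ≤ n := by exact_mod_cast hn
  have hint {x₀ x₁ : ℝ} (h₀ : (N : ℝ) ≤ x₀) (h₁ : x₀ ≤ x₁) :=
    intervalIntegrable_of_continuousOn_Ioi hf (hN.trans_le h₀) h₁
  have hpieces := intervalIntegral.sum_integral_adjacent_intervals (μ := volume)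
    (a := fun i => ((n + i : ℕ) : ℝ)) (n := a)
    (fun k _ => hint (by push_cast; linarith) (by push_cast; linarith))
  have hsplit := intervalIntegral.integral_interval_sub_left
    (hint (x₁ := ((n + a : ℕ) : ℝ)) le_rfl (by push_cast; linarith))
    (hint le_rfl hnN)
  have hsum := Finset.sum_Ico_consecutive
    (fun k => 1 / ((harmonic k : ℝ) - eulerMascheroniConstant + t)) hn (n.le_add_right a)
  rw [Finset.sum_Ico_eq_sum_range _ n, Nat.add_sub_cancel_left] at hsum
  unfold thetaSeq thetaTerm
  rw [sum_sub_distrib]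
  push_cast at hpieces hsplit ⊢
  simp only [add_zero, ← add_assoc] at hpieces
  linarith

theorem le_sum_range_thetaTerm {n : ℕ} (hn : exp (-t) < n) (a : ℕ) :
    (∫ x in (n : ℝ) + 1..(n : ℝ) + 1 + a, powLogInv t 2 2 x) / 24 +
        (powLogInv t 1 2 (n + 1) - powLogInv t 1 2 (n + 1 + a)) / 24 ≤
      ∑ i ∈ range a, thetaTerm t (n + i) := by
  have hn1 : exp (-t) < n + 1 := by linarith
  have hF := sub_powLogInv_one_two_le_sum_range hn1 a
  have hG := ((antitoneOn_powLogInv (t := t) 2 2).mono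
    fun y hy => hn1.trans_le hy.1).integral_le_sum (x₀ := (n : ℝ) + 1) (a := a)
  have hterms :
      ∑ i ∈ range a, (invLogDeriv2 t (n + 1 + i) + powLogInv t 2 2 (n + 1 + i)) / 24 ≤
        ∑ i ∈ range a, thetaTerm t (n + i) := by
    refine Finset.sum_le_sum fun i _ => ?_
    have := (thetaTerm_bounds (k := n + i) (by push_cast; linarith [i.cast_nonneg (α := ℝ)])).1
    push_cast at this
    rwa [add_right_comm (n : ℝ) 1 (i : ℝ)]
  rw [← Finset.sum_div, Finset.sum_add_distrib] at hterms
  linarith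

theorem sum_range_thetaTerm_le {n : ℕ} (hn : exp (-t) < n) (a : ℕ) :
    ∑ i ∈ range a, thetaTerm t (n + i) ≤
      (∫ x in Ioi (n : ℝ), powLogInv t 2 2 x) / 24 + powLogInv t 1 2 (n + 1 / 2) / 24 +
        powLogInv t 2 2 n / 24 + powLogInv t 2 3 n / 12 := by
  have hF := sum_range_invLogDeriv2_le hn a
  have hG := sum_range_powLogInv_two_two_le hn a
  have hterms : ∑ i ∈ range a, thetaTerm t (n + i) ≤
      ∑ i ∈ range a, (invLogDeriv2 t (n + i) + powLogInv t 2 2 (n + i + 1 / 2)) / 24 := by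
    refine Finset.sum_le_sum fun i _ => ?_
    exact_mod_cast
      (thetaTerm_bounds (k := n + i) (by push_cast; linarith [i.cast_nonneg (α := ℝ)])).2
  rw [← Finset.sum_div, Finset.sum_add_distrib] at hterms
  simp only [invLogDeriv2] at hF hterms ⊢
  linarith

theorem le_of_tendsto_sum_thetaTerm {n : ℕ} (hn : exp (-t) < n) {S : ℝ}
    (hS : Tendsto (fun a => ∑ i ∈ range a, thetaTerm t (n + i)) atTop (𝓝 S)) :
    (∫ x in Ioi ((n : ℝ) + 1), powLogInv t 2 2 x) / 24 + powLogInv t 1 2 (n + 1) / 24 ≤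
      S := by
  have hb : Tendsto (fun a : ℕ => (n : ℝ) + 1 + a) atTop atTop :=
    tendsto_atTop_add_const_left _ _ tendsto_natCast_atTop_atTop
  have hn1 : exp (-t) < n + 1 := by linarith
  have hlim := ((intervalIntegral_tendsto_integral_Ioi _
    (integrableOn_Ioi_powLogInv_two_two hn1) hb).div_const 24).add
    (((tendsto_const_nhds (x := powLogInv t 1 2 (n + 1))).sub
      ((tendsto_powLogInv_one_two_atTop (t := t)).comp hb)).div_const 24)
  rw [sub_zero] at hlim
  exact le_of_tendsto_of_tendsto hlim hS (.of_forall (le_sum_range_thetaTerm hn))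

end Theta

theorem stmt_14 (N : ℕ) (hN : 0 < N) (t : ℝ) (ht : -Real.log N < t)
    (L : ℝ) (hL : Filter.Tendsto (thetaSeq N t) Filter.atTop (𝓝 L)) :
    ∀ n : ℕ, N ≤ n →
      (∫ x in Set.Ioi ((n : ℝ) + 1), 1 / (24 * x^2 * (t + Real.log x)^2)) +
          1 / (24 * ((n : ℝ) + 1) * (t + Real.log ((n : ℝ) + 1))^2) ≤
        L - thetaSeq N t n ∧
      L - thetaSeq N t n ≤
        (∫ x in Set.Ioi (n : ℝ), 1 / (24 * x^2 * (t + Real.log x)^2)) +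
          1 / (24 * ((n : ℝ) + 1/2) * (t + Real.log ((n : ℝ) + 1/2))^2) +
          1 / (24 * (n : ℝ)^2 * (t + Real.log (n : ℝ))^2) +
          1 / (12 * (n : ℝ)^2 * (t + Real.log (n : ℝ))^3) := by
  intro n hn
  have hN' : exp (-t) < N := by
    rw [← exp_log (Nat.cast_pos.2 hN)]
    exact exp_lt_exp.2 (by linarith)
  have hn' : exp (-t) < n := hN'.trans_le (by exact_mod_cast hn)
  have hS : Tendsto (fun a => ∑ i ∈ range a, thetaTerm t (n + i)) atTop
      (𝓝 (L - thetaSeq N t n)) := by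
    refine ((hL.comp (tendsto_add_atTop_nat n)).sub_const (thetaSeq N t n)).congr fun a => ?_
    rw [Function.comp_apply, add_comm, thetaSeq_add_sub hN' hn]
  have hlower := le_of_tendsto_sum_thetaTerm hn' hS
  have hupper := le_of_tendsto' hS (sum_range_thetaTerm_le hn')
  simp only [← integral_div, powLogInv_div, pow_one] at hlower hupper
  exact ⟨hlower, hupper⟩
end
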